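/- arXiv:hep-th/9309118 — 4 statements merged into one kernel-verified Lean document; each statement's English description precedes it below -/
import Mathlib

section
/- Let n, N be positive integers, and suppose ϑ satisfies the transformation law ϑ(x₁,…,xₙ|z₁,…,z_jτ⁴,…,z_N) = ϑ(x₁,…,xₙ|z₁,…,z_N)·∏_{μ=1}^n (−z_jτ/x_μ). Then for every j ∈ {1,…,N} and all x ∈ (ℂ∖{0})ⁿ, z ∈ (ℂ∖{0})^N such that no ratio x_μ/z_i (1 ≤ μ ≤ n, 1 ≤ i ≤ N) is an odd integer power of q, one has Ψ(x₁,…,xₙ|z₁,…,z_jτ⁴,…,z_N) = Ψ(x₁,…,xₙ|z₁,…,z_N) · ∏_{μ=1}^n (x_μ − z_jτ)/(x_μ − z_jτ³). -/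
open Finset Function

noncomputable section

/-- The infinite product `(z;p)_∞ = ∏_{k≥0} (1 - z p^k)`. -/
def pochInf (z p : ℂ) : ℂ := ∏' k : ℕ, (1 - z * p ^ k)

/-- `ψ(z) = 1/((zq;q⁴)_∞ (z⁻¹q;q⁴)_∞)`. -/
def psiF (q z : ℂ) : ℂ := 1 / (pochInf (z * q) (q ^ 4) * pochInf (z⁻¹ * q) (q ^ 4))

/-- The kernel `Ψ(x₁,…,xₙ|z₁,…,z_N) = ϑ(x|z)·∏_{μ,j} ψ(x_μ/z_j)`. -/
def kerPsi (q : ℂ) {n N : ℕ} (θ : (Fin n → ℂ) → (Fin N → ℂ) → ℂ)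
    (x : Fin n → ℂ) (z : Fin N → ℂ) : ℂ :=
  θ x z * ∏ μ : Fin n, ∏ j : Fin N, psiF q (x μ / z j)

/-- One-variable kernel `Ψ(x|z₁,…,z_N) = ϑ(x|z)·∏_j ψ(x/z_j)`. -/
def kerPsi1 (q : ℂ) {N : ℕ} (θ : ℂ → (Fin N → ℂ) → ℂ) (x : ℂ) (z : Fin N → ℂ) : ℂ :=
  θ x z * ∏ j : Fin N, psiF q (x / z j)

/-- Elementary symmetric polynomial `σ_κ(a₁,…,a_m)`. -/
def esym {m : ℕ} (a : Fin m → ℂ) (κ : ℕ) : ℂ :=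
  ∑ s ∈ Finset.powersetCard κ (Finset.univ : Finset (Fin m)), ∏ i ∈ s, a i

/-- Complete homogeneous symmetric polynomial `σ̃_κ(a₁,…,a_m)`. -/
def hsym {m : ℕ} (a : Fin m → ℂ) (κ : ℕ) : ℂ :=
  ∑ μ ∈ (Finset.univ : Finset (Fin m)).sym κ, (Multiset.map a (μ : Multiset (Fin m))).prod

/-- `h^{(m)}(x|z) = x⁻¹(∏_j (x - z_jτ) - τ^{2m} ∏_j (x - z_jτ⁻¹))` as a polynomial in `x`
(the bracket vanishes at `x = 0`, so division is exact). -/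
def hN (τ : ℂ) {m : ℕ} (z : Fin m → ℂ) : Polynomial ℂ :=
  ((∏ j : Fin m, (Polynomial.X - Polynomial.C (z j * τ)))
      - Polynomial.C (τ ^ (2 * m)) * ∏ j : Fin m, (Polynomial.X - Polynomial.C (z j * τ⁻¹)))
    /ₘ Polynomial.X

/-- `φ^{(nl)}_{λκ}(a|b)`. -/
def phiP (τ : ℂ) {n l : ℕ} (lam κ : ℕ) (a : Fin n → ℂ) (b : Fin l → ℂ) : ℂ :=
  esym b κ - ∑ β ∈ Finset.Icc lam κ, ∑ α ∈ Finset.Icc lam β,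
    (-1 : ℂ) ^ (β - α) * τ ^ (2 * β) * esym b (κ - β) * esym a α * hsym a (β - α)

/-- `f^{(nl)}_λ(x|a|b) = Σ_{κ=0}^{l−n+λ−2} (1 − τ^{2(l−n+λ−1−κ)})(−τ)^κ φ^{(nl)}_{λκ}(a|b)
x^{l−n+λ−2−κ}` (empty sum if `l−n+λ−2 < 0`). -/
def fP (τ : ℂ) {n l : ℕ} (lam : ℕ) (x : ℂ) (a : Fin n → ℂ) (b : Fin l → ℂ) : ℂ :=
  ∑ κ ∈ Finset.range ((l : ℤ) - n + lam - 1).toNat,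
    (1 - τ ^ (2 * (((l : ℤ) - n + lam - 1).toNat - κ))) * (-τ) ^ κ * phiP τ lam κ a b
      * x ^ (((l : ℤ) - n + lam - 1).toNat - 1 - κ)

/-- `g^{(n)}_λ(x|a) = Σ_{κ=0}^{λ−2} (1 − τ^{2(λ−1−κ)})(−τ)^κ σ_κ(a) x^{λ−2−κ}`. -/
def gP (τ : ℂ) {n : ℕ} (lam : ℕ) (x : ℂ) (a : Fin n → ℂ) : ℂ :=
  ∑ κ ∈ Finset.range (lam - 1),
    (1 - τ ^ (2 * (lam - 1 - κ))) * (-τ) ^ κ * esym a κ * x ^ (lam - 2 - κ)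

/-- `A^{(nl)}_λ(x|a|b)`. -/
def AP (τ : ℂ) {n l : ℕ} (lam : ℕ) (x : ℂ) (a : Fin n → ℂ) (b : Fin l → ℂ) : ℂ :=
  (∏ j : Fin n, (x - a j * τ)) * fP τ lam x a b
    + τ ^ (2 * (l - n + lam - 1)) * (∏ i : Fin l, (x - b i * τ⁻¹)) * gP τ lam x a

/-- `Δ^{(nl)}(x₁,…,xₙ|a|b) = det(A^{(nl)}_λ(x_μ|a|b))_{1 ≤ λ,μ ≤ n}`. -/
def DeltaP (τ : ℂ) {n l : ℕ} (x : Fin n → ℂ) (a : Fin n → ℂ) (b : Fin l → ℂ) : ℂ :=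
  Matrix.det (Matrix.of fun lam μ : Fin n => AP τ ((lam : ℕ) + 1) (x μ) a b)

/-- The explicit `Δ(x|z₁|b₁,…,b_m)` of the case `n = 1` (here `m = N − 1`):
`(x−z₁τ)·Σ_{κ=0}^{N−3}(1−τ^{2(N−2−κ)})(−τ)^κ x^{N−3−κ} Σ_{λ=0}^{κ}(−z₁τ²)^λ σ_{κ−λ}(b)`. -/
def Delta1 (τ : ℂ) {m : ℕ} (x z1 : ℂ) (b : Fin m → ℂ) : ℂ :=
  (x - z1 * τ) * ∑ κ ∈ Finset.range (m - 1),
    (1 - τ ^ (2 * (m - 1 - κ))) * (-τ) ^ κ * x ^ (m - 2 - κ) *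
      ∑ lam ∈ Finset.range (κ + 1), (-(z1 * τ ^ 2)) ^ lam * esym b (κ - lam)

/-- Iterated contour integral over `n` copies of the anticlockwise circle `|x| = ρ`. -/
def multiCircle : (n : ℕ) → ((Fin n → ℂ) → ℂ) → ℝ → ℂ
  | 0, f, _ => f (fun i => i.elim0)
  | n + 1, f, ρ => ∮ t in C(0, ρ), multiCircle n (fun x => f (Fin.cons t x)) ρ

/-- `H(a|b) = ∮⋯∮ F(x|a,b) Ψ(x|a,b) dx₁⋯dxₙ` with
`F = Δ^{(nl)}(x|a|b)/∏_{j,i}(b_i − a_jτ²)`. -/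
def Hfun (q τ : ℂ) {n l : ℕ} (θ : (Fin n → ℂ) → (Fin (n + l) → ℂ) → ℂ)
    (a : Fin n → ℂ) (b : Fin l → ℂ) (ρ : ℝ) : ℂ :=
  multiCircle n (fun x =>
    (DeltaP τ x a b / ∏ j : Fin n, ∏ i : Fin l, (b i - a j * τ ^ 2)) *
      kerPsi q θ x (Fin.append a b)) ρ

/-- The radius `ρ` separates the poles: `max_i |w_i q| < ρ < min_i |w_i q⁻¹|`
for the tuple `w = (a, b)`. -/
def admissible (q : ℂ) {n l : ℕ} (a : Fin n → ℂ) (b : Fin l → ℂ) (ρ : ℝ) : Prop :=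
  (∀ j, ‖a j * q‖ < ρ) ∧ (∀ j, ρ < ‖a j * q⁻¹‖) ∧
  (∀ i, ‖b i * q‖ < ρ) ∧ (∀ i, ρ < ‖b i * q⁻¹‖)

/-- The denominator of `F` does not vanish: `w_i − w_jτ² ≠ 0` for `1 ≤ j ≤ n < i ≤ N`. -/
def regularF (τ : ℂ) {n l : ℕ} (a : Fin n → ℂ) (b : Fin l → ℂ) : Prop :=
  ∀ (j : Fin n) (i : Fin l), b i - a j * τ ^ 2 ≠ 0

end

/-! Shifting `(uq;q⁴)_∞ = (1 - uq)(uq⁵;q⁴)_∞` and `(u⁻¹q⁻³;q⁴)_∞ = (1 - u⁻¹q⁻³)(u⁻¹q;q⁴)_∞`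
shows `ψ(uq⁴) = ψ(u)(1 - uq)/(1 - u⁻¹q⁻³)`: both sides share the factor
`1/((uq⁵;q⁴)_∞ (u⁻¹q;q⁴)_∞)`, so no non-vanishing of infinite products is needed.
Replacing `z_j` by `z_jτ⁴` changes only the factors `ψ(x_μ/z_j)` of `Ψ`, and with `u = x_μ/z_j`
the ratio above times the multiplier `−z_jτ/x_μ` of `ϑ` is `(x_μ − z_jτ)/(x_μ − z_jτ³)`. -/

theorem multipliable_one_sub_mul_pow (z : ℂ) {p : ℂ} (hp : ‖p‖ < 1) :
    Multipliable fun k : ℕ => 1 - z * p ^ k := by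
  have hsum : Summable fun k : ℕ => ‖-(z * p ^ k)‖ := by
    simpa [norm_mul, norm_pow] using (summable_geometric_of_lt_one (norm_nonneg p) hp).mul_left ‖z‖
  simpa [sub_eq_add_neg] using multipliable_one_add_of_summable hsum

theorem pochInf_eq_one_sub_mul (z : ℂ) {p : ℂ} (hp : ‖p‖ < 1) :
    pochInf z p = (1 - z) * pochInf (z * p) p := by
  have htail : Multipliable fun k : ℕ => 1 - z * p ^ (k + 1) :=
    (multipliable_one_sub_mul_pow (z * p) hp).congr fun k => by ring
  rw [pochInf, tprod_eq_zero_mul' (f := fun k : ℕ => 1 - z * p ^ k) htail, pow_zero, mul_one,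
    pochInf]
  exact congrArg _ (tprod_congr fun k => by ring)

theorem psiF_mul_pow_four {q : ℂ} (hq1 : ‖q‖ < 1) {u : ℂ} (hu : u * q ≠ 1) :
    psiF q (u * q ^ 4) = psiF q u * ((1 - u * q) / (1 - u⁻¹ * q⁻¹ ^ 3)) := by
  have hp : ‖q ^ 4‖ < 1 := by
    rw [norm_pow]; exact pow_lt_one₀ (norm_nonneg q) hq1 (by norm_num)
  have hinv : (u * q ^ 4)⁻¹ * q = u⁻¹ * q⁻¹ ^ 3 := by
    rcases eq_or_ne q 0 with rfl | hq
    · simp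
    · field_simp
  have hshift : u⁻¹ * q⁻¹ ^ 3 * q ^ 4 = u⁻¹ * q := by
    rcases eq_or_ne q 0 with rfl | hq
    · simp
    · field_simp
  rw [psiF, psiF, hinv, pochInf_eq_one_sub_mul (u * q) hp,
    pochInf_eq_one_sub_mul (u⁻¹ * q⁻¹ ^ 3) hp, hshift,
    show u * q ^ 4 * q = u * q * q ^ 4 by ring]
  field_simp

theorem psiF_div_mul_inv_pow_four {q : ℂ} (hq : q ≠ 0) (hq1 : ‖q‖ < 1) {x z : ℂ}
    (hx : x ≠ 0) (hz : z ≠ 0) (hxz : x / z ≠ q⁻¹) :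
    -z * q⁻¹ / x * psiF q (x / (z * q⁻¹ ^ 4))
      = psiF q (x / z) * ((x - z * q⁻¹) / (x - z * q⁻¹ ^ 3)) := by
  have hxz' : x / z * q ≠ 1 := fun h => hxz (eq_inv_of_mul_eq_one_left h)
  rw [show x / (z * q⁻¹ ^ 4) = x / z * q ^ 4 by field_simp, psiF_mul_pow_four hq1 hxz']
  field_simp
  ring

theorem Fintype.prod_comp_update {ι α M : Type*} [DecidableEq ι] [Fintype ι] [CommMonoid M]
    (g : α → M) (z : ι → α) (j : ι) (w : α) :
    ∏ i, g (update z j w i) = g w * ∏ i ∈ {j}ᶜ, g (z i) := by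
  rw [Fintype.prod_eq_mul_prod_compl j, update_self]
  exact congrArg _ (Finset.prod_congr rfl fun i hi => by rw [update_of_ne (by simpa using hi)])

theorem stmt_0_general (q : ℂ) (hq0 : 0 < ‖q‖) (hq1 : ‖q‖ < 1)
    (τ : ℂ) (hτ : τ = q⁻¹) (n N : ℕ)
    (θ : (Fin n → ℂ) → (Fin N → ℂ) → ℂ)
    (hθ : ∀ (x : Fin n → ℂ) (z : Fin N → ℂ) (j : Fin N),
      θ x (Function.update z j (z j * τ ^ 4))
        = θ x z * ∏ μ, (-(z j) * τ / x μ))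
    (j : Fin N) (x : Fin n → ℂ) (z : Fin N → ℂ)
    (hx : ∀ μ, x μ ≠ 0) (hz : ∀ i, z i ≠ 0)
    (hreg : ∀ (μ : Fin n) (i : Fin N) (m : ℤ), Odd m → x μ / z i ≠ q ^ m) :
    kerPsi q θ x (Function.update z j (z j * τ ^ 4))
      = kerPsi q θ x z * ∏ μ, (x μ - z j * τ) / (x μ - z j * τ ^ 3) := by
  subst hτ
  have hq : q ≠ 0 := norm_pos_iff.mp hq0
  rw [kerPsi, kerPsi, hθ, mul_assoc, mul_assoc, ← prod_mul_distrib, ← prod_mul_distrib]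
  refine congrArg _ (prod_congr rfl fun μ _ => ?_)
  have hfactor := psiF_div_mul_inv_pow_four hq hq1 (hx μ) (hz j)
    (by simpa using hreg μ j (-1) (by decide))
  rw [Fintype.prod_comp_update (fun w => psiF q (x μ / w)), Fintype.prod_eq_mul_prod_compl j]
  linear_combination (∏ i ∈ {j}ᶜ, psiF q (x μ / z i)) * hfactor

/-- quasi-periodicity of the kernel `Ψ` in a variable `z_j`. -/
theorem stmt_0 (q : ℂ) (hq0 : 0 < ‖q‖) (hq1 : ‖q‖ < 1)
    (τ : ℂ) (hτ : τ = q⁻¹) (n N : ℕ) (hn : 0 < n) (hN : 0 < N)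
    (θ : (Fin n → ℂ) → (Fin N → ℂ) → ℂ)
    (hθ : ∀ (x : Fin n → ℂ) (z : Fin N → ℂ) (j : Fin N),
      θ x (Function.update z j (z j * τ ^ 4))
        = θ x z * ∏ μ, (-(z j) * τ / x μ))
    (j : Fin N) (x : Fin n → ℂ) (z : Fin N → ℂ)
    (hx : ∀ μ, x μ ≠ 0) (hz : ∀ i, z i ≠ 0)
    (hreg : ∀ (μ : Fin n) (i : Fin N) (m : ℤ), Odd m → x μ / z i ≠ q ^ m) :
    kerPsi q θ x (Function.update z j (z j * τ ^ 4))
      = kerPsi q θ x z * ∏ μ, (x μ - z j * τ) / (x μ - z j * τ ^ 3) :=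
  stmt_0_general q hq0 hq1 τ hτ n N θ hθ j x z hx hz hreg
end

section
/- Let N ≥ 3 and define the polynomial Δ(x|z₁|z₂,…,z_N) = (x − z₁τ) · Σ_{κ=0}^{N−3} (1 − τ^{2(N−2−κ)}) (−τ)^κ x^{N−3−κ} · Σ_{λ=0}^{κ} (−z₁τ²)^λ σ_{κ−λ}(z₂,…,z_N). Then for each j with 2 ≤ j ≤ N, substituting z_j = z₁τ² yields the polynomial identity Δ(x|z₁|z₂,…,z_N)|_{z_j = z₁τ²} = (x − z₁τ) · h^{(N−2)}(x|z₂,…,ẑ_j,…,z_N), where the hat means that the variable z_j is omitted. -/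
open Finset Function

/-!
Put `v = z₁τ²`. Since `∏ (1 + z_i T) = (1 + vT) ∏_{i ≠ j} (1 + z_i T)` once `z_j = v`, dividing by
`1 + vT` shows that the inner sum `Σ_λ (-v)^λ σ_{κ-λ}(z₂,…,z_N)` becomes `σ_κ(z₂,…,ẑ_j,…,z_N)`.
On the other side, expanding both products in `h^{(N-2)}` by Vieta's formula, the coefficient of
`x^{N-3-κ}` is `(1 - τ^{2(N-2-κ)})(-τ)^κ σ_κ`, the `x⁰`-terms cancelling by `τ^{2m} τ^{-m} = τ^m`.
-/

open Polynomial

namespace Multiset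

variable {R : Type*}

theorem esymm_cons_succ [CommSemiring R] (a : R) (s : Multiset R) (n : ℕ) :
    (a ::ₘ s).esymm (n + 1) = s.esymm (n + 1) + a * s.esymm n := by
  simp only [esymm, powersetCard_cons, map_add, sum_add, map_map, Function.comp_def, prod_cons,
    sum_map_mul_left]

theorem sum_neg_pow_mul_esymm_cons [CommRing R] (a : R) (s : Multiset R) (n : ℕ) :
    ∑ k ∈ Finset.range (n + 1), (-a) ^ k * (a ::ₘ s).esymm (n - k) = s.esymm n := by
  induction n with
  | zero => simp [esymm]
  | succ n ih =>
    rw [Finset.sum_range_succ', pow_zero, one_mul, Nat.sub_zero, esymm_cons_succ]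
    have shift : ∑ k ∈ Finset.range (n + 1), (-a) ^ (k + 1) * (a ::ₘ s).esymm (n + 1 - (k + 1))
        = -a * s.esymm n := by
      rw [← ih, Finset.mul_sum]
      exact Finset.sum_congr rfl fun k _ => by rw [Nat.add_sub_add_right]; ring
    rw [shift]
    ring

theorem prod_X_sub_C_mul_eq_sum_esymm [CommRing R] (s : Multiset R) (t : R) :
    (s.map fun r => X - C (r * t)).prod =
      ∑ j ∈ Finset.range (card s + 1), C ((-t) ^ j * s.esymm j) * X ^ (card s - j) := by
  have hlin : (s.map fun r => X - C (r * t)) = (s.map ((-t) • ·)).map fun r => X + C r := by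
    rw [map_map]
    exact map_congr rfl fun r _ => by simp [sub_eq_add_neg, mul_comm]
  rw [hlin, prod_X_add_C_eq_sum_esymm, card_map]
  refine Finset.sum_congr rfl fun j _ => ?_
  rw [← pow_smul_esymm, smul_eq_mul]

end Multiset

theorem esym_eq_esymm {m : ℕ} (a : Fin m → ℂ) (κ : ℕ) :
    esym a κ = (Finset.univ.val.map a).esymm κ :=
  (Finset.esymm_map_val a _ κ).symm

theorem Fin.univ_val_map_update {m : ℕ} {M : Type*} (b : Fin (m + 1) → M) (j : Fin (m + 1))
    (v : M) :
    Finset.univ.val.map (Function.update b j v) = v ::ₘ Finset.univ.val.map (b ∘ j.succAbove) := by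
  rw [Fin.univ_succAbove m j, Finset.cons_val, Multiset.map_cons, Function.update_self,
    Finset.map_val, Multiset.map_map]
  congr 1
  exact Multiset.map_congr rfl fun i _ => Function.update_of_ne (Fin.succAbove_ne j i) _ _

theorem sum_neg_pow_mul_esym_update {m : ℕ} (b : Fin (m + 1) → ℂ) (j : Fin (m + 1)) (v : ℂ)
    (κ : ℕ) :
    ∑ k ∈ Finset.range (κ + 1), (-v) ^ k * esym (Function.update b j v) (κ - k)
      = esym (b ∘ j.succAbove) κ := by
  simp only [esym_eq_esymm, Fin.univ_val_map_update]
  exact Multiset.sum_neg_pow_mul_esymm_cons v _ κ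

theorem prod_X_sub_C_mul_eq_sum_esym {m : ℕ} (a : Fin m → ℂ) (t : ℂ) :
    ∏ i, (X - C (a i * t)) = ∑ κ ∈ Finset.range (m + 1), C ((-t) ^ κ * esym a κ) * X ^ (m - κ) := by
  rw [← Finset.prod_map_val, ← Function.comp_def (fun r => X - C (r * t)) a, ← Multiset.map_map,
    Multiset.prod_X_sub_C_mul_eq_sum_esymm, Multiset.card_map, Finset.card_val, Finset.card_univ,
    Fintype.card_fin]
  simp only [esym_eq_esymm]

theorem pow_two_mul_mul_neg_inv_pow {F : Type*} [Field F] (τ : F) {m κ : ℕ} (h : κ ≤ m) :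
    τ ^ (2 * m) * (-τ⁻¹) ^ κ = τ ^ (2 * (m - κ)) * (-τ) ^ κ := by
  obtain ⟨d, rfl⟩ := Nat.exists_eq_add_of_le h
  rw [Nat.add_sub_cancel_left, mul_add, pow_add, pow_mul, mul_right_comm, ← mul_pow, mul_neg,
    sq, mul_self_mul_inv, mul_comm]

theorem hN_eq_sum (τ : ℂ) {n : ℕ} (c : Fin (n + 1) → ℂ) :
    hN τ c = ∑ κ ∈ Finset.range (n + 1),
      C ((1 - τ ^ (2 * (n + 1 - κ))) * (-τ) ^ κ * esym c κ) * X ^ (n - κ) := by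
  suffices hX : (∏ j, (X - C (c j * τ))) - C (τ ^ (2 * (n + 1))) * ∏ j, (X - C (c j * τ⁻¹))
      = X * ∑ κ ∈ Finset.range (n + 1),
          C ((1 - τ ^ (2 * (n + 1 - κ))) * (-τ) ^ κ * esym c κ) * X ^ (n - κ) by
    rw [hN, hX, mul_divByMonic_cancel_left _ monic_X]
  have termwise : ∀ κ ∈ Finset.range (n + 2),
      C ((-τ) ^ κ * esym c κ) * X ^ (n + 1 - κ)
        - C (τ ^ (2 * (n + 1))) * (C ((-τ⁻¹) ^ κ * esym c κ) * X ^ (n + 1 - κ))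
      = C ((1 - τ ^ (2 * (n + 1 - κ))) * (-τ) ^ κ * esym c κ) * X ^ (n + 1 - κ) := by
    intro κ hκ
    rw [← mul_assoc, ← C_mul, ← mul_assoc,
      pow_two_mul_mul_neg_inv_pow τ (Nat.lt_succ_iff.mp (Finset.mem_range.mp hκ)), ← sub_mul,
      ← C_sub]
    ring_nf
  rw [prod_X_sub_C_mul_eq_sum_esym, prod_X_sub_C_mul_eq_sum_esym, Finset.mul_sum,
    ← Finset.sum_sub_distrib, Finset.sum_congr rfl termwise, Finset.sum_range_succ, Nat.sub_self,
    Nat.mul_zero, pow_zero, sub_self, zero_mul, zero_mul, C_0, zero_mul, add_zero, Finset.mul_sum]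
  refine Finset.sum_congr rfl fun κ hκ => ?_
  rw [Nat.succ_sub (Nat.lt_succ_iff.mp (Finset.mem_range.mp hκ)), pow_succ]
  ring

/-- Here `N = K + 3` and `b` is the tuple `(z₂,…,z_N)`. -/
theorem stmt_6_general (τ : ℂ) (K : ℕ)
    (x z1 : ℂ) (b : Fin (K + 2) → ℂ) (j : Fin (K + 2)) :
    Delta1 τ x z1 (Function.update b j (z1 * τ ^ 2))
      = (x - z1 * τ) * (hN τ (fun i : Fin (K + 1) => b (j.succAbove i))).eval x := by
  rw [Delta1, hN_eq_sum, eval_finsetSum, Finset.mul_sum, Finset.mul_sum]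
  refine Finset.sum_congr (by rfl) fun κ hκ => ?_
  have hκK : κ ≤ K := Nat.lt_succ_iff.mp (Finset.mem_range.mp hκ)
  rw [sum_neg_pow_mul_esym_update, show K + 2 - 1 - κ = K + 1 - κ by omega,
    show K + 2 - 2 - κ = K - κ by omega]
  simp only [eval_mul, eval_C, eval_pow, eval_X, Function.comp_def]
  ring

/-- the restriction of `Δ(x|z₁|z₂,…,z_N)` at `z_j = z₁τ²`.
Here `N = K + 3` and `b : Fin (K+2) → ℂ` is the tuple `(z₂,…,z_N)`. -/
theorem stmt_6 (q : ℂ) (hq0 : 0 < ‖q‖) (hq1 : ‖q‖ < 1)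
    (τ : ℂ) (hτ : τ = q⁻¹) (K : ℕ)
    (x z1 : ℂ) (b : Fin (K + 2) → ℂ) (j : Fin (K + 2)) :
    Delta1 τ x z1 (Function.update b j (z1 * τ ^ 2))
      = (x - z1 * τ) * (hN τ (fun i : Fin (K + 1) => b (j.succAbove i))).eval x :=
  stmt_6_general τ K x z1 b j
end

section
/- For all integers n ≥ 1, l ≥ 1 and λ ≥ 1, the following recursion identities hold as polynomial identities: f^{(nl)}_λ(x|a₁,…,a_{n−1},a|b₁,…,b_{l−1},aτ²) = f^{(n−1,l−1)}_λ(x|a₁,…,a_{n−1}|b₁,…,b_{l−1}) − aτ³ · f^{(n−1,l−1)}_{λ−1}(x|a₁,…,a_{n−1}|b₁,…,b_{l−1}), and g^{(n)}_λ(x|a₁,…,a_{n−1},a) = g^{(n−1)}_λ(x|a₁,…,a_{n−1}) − aτ · g^{(n−1)}_{λ−1}(x|a₁,…,a_{n−1}). -/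
open Finset Function

/-!
Pass to generating series in `t`. The sequence `σ(a)` becomes `E_a = ∏ (1 + a_j t)`, the signed
sequence `(-1)^j σ̃_j(a)` becomes `U_a = E_a⁻¹`, and `φ_λ(a|b)` is the coefficient sequence of
`Φ_λ(a|b) = E_b · (1 - (E_a^{≥λ} U_a)(τ² t))`, where `E^{≥λ}` drops the terms of degree `< λ`.
Appending `c` to `a` and `cτ²` to `b` multiplies `E_a` by `1 + c t`, divides `U_a` by it, multiplies
`E_b` by `1 + cτ² t` (which is `1 + c t` evaluated at `τ² t`), and shifts the truncation:
`E^{≥λ+1}` becomes `E_a^{≥λ+1} + c t E_a^{≥λ}`. Hence the new `Φ_{λ+1}` is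
`Φ_{λ+1}(a|b) + cτ² t Φ_λ(a|b)`. Both `f` and `g` are the same linear functional of their
coefficient sequences, and it turns multiplication by `t` into multiplication by `-τ` together with
lowering the summation range by one.
-/

open PowerSeries

lemma Multiset.esymm_cons_succ_s10 {R : Type*} [CommSemiring R] (c : R) (s : Multiset R) (κ : ℕ) :
    (c ::ₘ s).esymm (κ + 1) = s.esymm (κ + 1) + c * s.esymm κ := by
  simp only [Multiset.esymm, Multiset.powersetCard_cons, Multiset.map_add, Multiset.sum_add,
    Multiset.map_map, Function.comp_def, Multiset.prod_cons, Multiset.sum_map_mul_left]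

lemma Finset.Nat.sum_antidiagonal_ite_le {M : Type*} [AddCommMonoid M] (k n : ℕ)
    (f : ℕ → ℕ → M) :
    ∑ p ∈ antidiagonal n, (if k ≤ p.1 then f p.1 p.2 else 0) = ∑ i ∈ Icc k n, f i (n - i) := by
  rw [Finset.Nat.sum_antidiagonal_eq_sum_range_succ_mk, ← Finset.sum_filter]
  congr 1
  ext i
  simp only [Finset.mem_filter, Finset.mem_range, Finset.mem_Icc]
  omega

noncomputable section Series

variable {R : Type*} [CommRing R]

def dropBelow (n : ℕ) (f : R⟦X⟧) : R⟦X⟧ :=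
  mk fun i => if n ≤ i then coeff i f else 0

lemma dropBelow_succ_add_C_mul_X_mul (n : ℕ) (c : R) (f g : R⟦X⟧) :
    dropBelow (n + 1) (f + C c * X * g) = dropBelow (n + 1) f + C c * X * dropBelow n g := by
  ext (_ | i) <;> simp [dropBelow, mul_assoc, coeff_succ_X_mul]
  split_ifs <;> ring

lemma rescale_C_mul_X (a c : R) : rescale a (C c * X) = C (c * a) * X := by
  ext n
  simp only [coeff_rescale, coeff_C_mul, coeff_X]
  split_ifs with h <;> simp [h, mul_comm]

def weightedSum (τ x : R) (M : ℕ) (φ : R⟦X⟧) : R :=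
  ∑ κ ∈ range M, (1 - τ ^ (2 * (M - κ))) * (-τ) ^ κ * coeff κ φ * x ^ (M - 1 - κ)

lemma weightedSum_X_mul (τ x : R) (M : ℕ) (φ : R⟦X⟧) :
    weightedSum τ x M (X * φ) = -τ * weightedSum τ x (M - 1) φ := by
  rcases M with _ | M
  · simp [weightedSum]
  rw [weightedSum, Finset.sum_range_succ', coeff_zero_X_mul, weightedSum, Finset.mul_sum]
  simp only [mul_zero, zero_mul, add_zero, coeff_succ_X_mul]
  refine Finset.sum_congr rfl fun κ hκ => ?_
  have hκ : κ < M := Finset.mem_range.1 hκ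
  rw [show M + 1 - (κ + 1) = M - κ by omega, show M + 1 - 1 - (κ + 1) = M - 1 - κ by omega,
    Nat.add_sub_cancel, pow_succ]
  ring

lemma weightedSum_add_C_mul_X_mul (τ x c : R) (M : ℕ) (φ ψ : R⟦X⟧) :
    weightedSum τ x M (φ + C c * X * ψ)
      = weightedSum τ x M φ - c * τ * weightedSum τ x (M - 1) ψ := by
  have hlin : weightedSum τ x M (φ + C c * (X * ψ))
      = weightedSum τ x M φ + c * weightedSum τ x M (X * ψ) := by
    simp only [weightedSum, map_add, coeff_C_mul, Finset.mul_sum, ← Finset.sum_add_distrib]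
    exact Finset.sum_congr rfl fun _ _ => by ring
  rw [mul_assoc, hlin, weightedSum_X_mul]
  ring

end Series

section SymmetricFunctions

variable {m : ℕ}

lemma esym_zero (a : Fin m → ℂ) : esym a 0 = 1 := by
  simp [esym]

lemma esym_snoc_succ (a : Fin m → ℂ) (c : ℂ) (κ : ℕ) :
    esym (Fin.snoc a c : Fin (m + 1) → ℂ) (κ + 1) = esym a (κ + 1) + c * esym a κ := by
  have hval : univ.val.map (Fin.snoc a c : Fin (m + 1) → ℂ) = c ::ₘ univ.val.map a := by
    rw [Fin.univ_val_map, Fin.univ_val_map, List.ofFn_succ']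
    simp [List.concat_eq_append]
  simp only [esym, ← Finset.esymm_map_val, hval, Multiset.esymm_cons_succ_s10]

lemma hsym_zero (a : Fin m → ℂ) : hsym a 0 = 1 := by
  simp [hsym]
  rfl

lemma hsym_snoc_succ (a : Fin m → ℂ) (c : ℂ) (n : ℕ) :
    hsym (Fin.snoc a c : Fin (m + 1) → ℂ) (n + 1)
      = hsym a (n + 1) + c * hsym (Fin.snoc a c : Fin (m + 1) → ℂ) n := by
  set a' : Fin (m + 1) → ℂ := Fin.snoc a c
  have hlast : ∑ μ ∈ (univ.sym (n + 1)).filter (Fin.last m ∈ ·),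
      ((μ : Multiset (Fin (m + 1))).map a').prod = c * hsym a' n := by
    rw [hsym, Finset.mul_sum]
    refine (Finset.sum_bij (fun t _ => Fin.last m ::ₛ t) (fun _ _ => by simp)
      (fun _ _ _ _ => (Sym.cons_inj_right _ _ _).1) (fun μ hμ => ?_) (fun t _ => ?_)).symm
    · obtain ⟨t, rfl⟩ := Sym.exists_cons_of_mem (Finset.mem_filter.1 hμ).2
      exact ⟨t, by simp, rfl⟩
    · simp [a', Sym.cons]
  have hrest : (univ.sym (n + 1)).filter (Fin.last m ∉ ·)
      = (univ.map Fin.castSuccEmb).sym (n + 1) := by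
    ext μ
    simp only [Finset.mem_filter, Finset.mem_sym_iff, Finset.mem_univ, true_and, Finset.mem_map,
      Fin.coe_castSuccEmb, Fin.exists_castSucc_eq, imp_true_iff]
    exact ⟨fun h x hx => by rintro rfl; exact h hx, fun h hμ => h _ hμ rfl⟩
  rw [hsym, ← Finset.sum_filter_add_sum_filter_not _ (Fin.last m ∈ ·), hlast, hrest,
    Finset.sym_map, Finset.sum_map, add_comm, hsym]
  congr 1
  refine Finset.sum_congr rfl fun μ _ => ?_
  simp [a', Sym.coe_map, Multiset.map_map]

end SymmetricFunctions

noncomputable section GeneratingSeries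

variable {m : ℕ}

def esymSeries (a : Fin m → ℂ) : ℂ⟦X⟧ := mk (esym a)

def altHsymSeries (a : Fin m → ℂ) : ℂ⟦X⟧ := mk fun j => (-1) ^ j * hsym a j

lemma esymSeries_snoc (a : Fin m → ℂ) (c : ℂ) :
    esymSeries (Fin.snoc a c : Fin (m + 1) → ℂ) = esymSeries a + C c * X * esymSeries a := by
  ext (_ | κ) <;> simp [esymSeries, mul_assoc, coeff_succ_X_mul, esym_zero, esym_snoc_succ]

lemma altHsymSeries_snoc_mul (a : Fin m → ℂ) (c : ℂ) :
    altHsymSeries (Fin.snoc a c : Fin (m + 1) → ℂ) * (1 + C c * X) = altHsymSeries a := by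
  ext (_ | j) <;> simp [altHsymSeries, mul_add, ← mul_assoc, coeff_succ_mul_X, hsym_zero,
    hsym_snoc_succ, pow_succ]
  ring

def phiSeries (τ : ℂ) {n l : ℕ} (lam : ℕ) (a : Fin n → ℂ) (b : Fin l → ℂ) : ℂ⟦X⟧ :=
  esymSeries b * (1 - rescale (τ ^ 2) (dropBelow lam (esymSeries a) * altHsymSeries a))

lemma coeff_dropBelow_esymSeries_mul_altHsymSeries (lam β : ℕ) (a : Fin m → ℂ) :
    coeff β (dropBelow lam (esymSeries a) * altHsymSeries a)
      = ∑ α ∈ Icc lam β, (-1) ^ (β - α) * esym a α * hsym a (β - α) := by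
  rw [coeff_mul, ← Finset.Nat.sum_antidiagonal_ite_le lam β
    fun α γ => (-1) ^ γ * esym a α * hsym a γ]
  refine Finset.sum_congr rfl fun p _ => ?_
  simp only [dropBelow, esymSeries, altHsymSeries, coeff_mk]
  split_ifs <;> ring

lemma coeff_phiSeries (τ : ℂ) {n l : ℕ} (lam κ : ℕ) (a : Fin n → ℂ) (b : Fin l → ℂ) :
    coeff κ (phiSeries τ lam a b) = phiP τ lam κ a b := by
  rw [phiSeries, mul_sub, mul_one, map_sub, coeff_mul, phiP, ← Finset.Nat.sum_antidiagonal_swap]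
  congr 1
  · exact coeff_mk _ _
  rw [← Finset.Nat.sum_antidiagonal_ite_le lam κ fun β γ => ∑ α ∈ Icc lam β,
    (-1) ^ (β - α) * τ ^ (2 * β) * esym b γ * esym a α * hsym a (β - α)]
  refine Finset.sum_congr rfl fun p _ => ?_
  rw [Prod.fst_swap, Prod.snd_swap, coeff_rescale, coeff_dropBelow_esymSeries_mul_altHsymSeries,
    esymSeries, coeff_mk]
  split_ifs with h
  · simp only [Finset.mul_sum, ← pow_mul]
    exact Finset.sum_congr rfl fun _ _ => by ring
  · simp [Finset.Icc_eq_empty (by omega : ¬lam ≤ p.1)]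

lemma phiSeries_snoc (τ : ℂ) {k : ℕ} (l : ℕ) (a : Fin m → ℂ) (b : Fin k → ℂ) (c : ℂ) :
    phiSeries τ (l + 1) (Fin.snoc a c : Fin (m + 1) → ℂ)
        (Fin.snoc b (c * τ ^ 2) : Fin (k + 1) → ℂ)
      = phiSeries τ (l + 1) a b + C (c * τ ^ 2) * X * phiSeries τ l a b := by
  have key : rescale (τ ^ 2) (dropBelow (l + 1) (esymSeries a + C c * X * esymSeries a)
        * altHsymSeries (Fin.snoc a c : Fin (m + 1) → ℂ)) * (1 + C (c * τ ^ 2) * X)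
      = rescale (τ ^ 2) (dropBelow (l + 1) (esymSeries a) * altHsymSeries a)
        + C (c * τ ^ 2) * X * rescale (τ ^ 2) (dropBelow l (esymSeries a) * altHsymSeries a) := by
    rw [← rescale_C_mul_X, ← map_one (rescale (τ ^ 2)), ← map_add, ← map_mul, mul_assoc,
      altHsymSeries_snoc_mul, dropBelow_succ_add_C_mul_X_mul, ← map_mul, ← map_add]
    congr 1
    ring
  simp only [phiSeries, esymSeries_snoc]
  linear_combination (-esymSeries b) * key

lemma gP_eq_weightedSum (τ x : ℂ) (lam : ℕ) (a : Fin m → ℂ) :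
    gP τ lam x a = weightedSum τ x (lam - 1) (esymSeries a) := by
  refine Finset.sum_congr rfl fun κ _ => ?_
  rw [esymSeries, coeff_mk, show lam - 2 - κ = lam - 1 - 1 - κ by omega]

lemma fP_eq_weightedSum (τ x : ℂ) {n l : ℕ} (lam : ℕ) (a : Fin n → ℂ) (b : Fin l → ℂ) :
    fP τ lam x a b = weightedSum τ x ((l : ℤ) - n + lam - 1).toNat (phiSeries τ lam a b) := by
  simp only [fP, weightedSum, coeff_phiSeries]

lemma gP_snoc (τ x c : ℂ) (lam : ℕ) (a : Fin m → ℂ) :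
    gP τ lam x (Fin.snoc a c : Fin (m + 1) → ℂ) = gP τ lam x a - c * τ * gP τ (lam - 1) x a := by
  rw [gP_eq_weightedSum, gP_eq_weightedSum, gP_eq_weightedSum, esymSeries_snoc,
    weightedSum_add_C_mul_X_mul]

lemma fP_snoc (τ x c : ℂ) {k : ℕ} (l : ℕ) (a : Fin m → ℂ) (b : Fin k → ℂ) :
    fP τ (l + 1) x (Fin.snoc a c : Fin (m + 1) → ℂ) (Fin.snoc b (c * τ ^ 2) : Fin (k + 1) → ℂ)
      = fP τ (l + 1) x a b - c * τ ^ 3 * fP τ l x a b := by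
  rw [fP_eq_weightedSum, fP_eq_weightedSum, fP_eq_weightedSum, phiSeries_snoc,
    weightedSum_add_C_mul_X_mul]
  have hdeg : ((k + 1 : ℕ) : ℤ) - (m + 1 : ℕ) + (l + 1 : ℕ) - 1
      = (k : ℤ) - m + (l + 1 : ℕ) - 1 := by
    push_cast
    ring
  rw [hdeg, show ((k : ℤ) - m + (l + 1 : ℕ) - 1).toNat - 1 = ((k : ℤ) - m + l - 1).toNat by omega]
  ring

end GeneratingSeries

theorem stmt_10_general (τ : ℂ) (m k lam : ℕ) (hlam : 1 ≤ lam)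
    (x a0 : ℂ) (a : Fin m → ℂ) (b : Fin k → ℂ) :
    fP τ lam x (Fin.snoc a a0) (Fin.snoc b (a0 * τ ^ 2))
        = fP τ lam x a b - a0 * τ ^ 3 * fP τ (lam - 1) x a b
    ∧ gP τ lam x (Fin.snoc a a0) = gP τ lam x a - a0 * τ * gP τ (lam - 1) x a := by
  obtain ⟨l, rfl⟩ := Nat.exists_eq_add_of_le' hlam
  exact ⟨fP_snoc τ x a0 l a b, gP_snoc τ x a0 (l + 1) a⟩

/-- recursion for `f^{(nl)}_λ` and `g^{(n)}_λ`; here `n = m + 1 ≥ 1`,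
`l = k + 1 ≥ 1`, `λ ≥ 1`. -/
theorem stmt_10 (q : ℂ) (hq0 : 0 < ‖q‖) (hq1 : ‖q‖ < 1)
    (τ : ℂ) (hτ : τ = q⁻¹) (m k lam : ℕ) (hlam : 1 ≤ lam)
    (x a0 : ℂ) (a : Fin m → ℂ) (b : Fin k → ℂ) :
    fP τ lam x (Fin.snoc a a0) (Fin.snoc b (a0 * τ ^ 2))
        = fP τ lam x a b - a0 * τ ^ 3 * fP τ (lam - 1) x a b
    ∧ gP τ lam x (Fin.snoc a a0) = gP τ lam x a - a0 * τ * gP τ (lam - 1) x a :=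
  stmt_10_general τ m k lam hlam x a0 a b
end

section
/- For all integers 1 ≤ n < l, the polynomial Δ^{(nl)}(x₁,…,xₙ|a₁,…,aₙ|b₁,…,b_l) is homogeneous of total degree n(l−1) + n(n−1)/2, is antisymmetric under permutations of (x₁,…,xₙ) (it changes sign under each transposition x_μ ↔ x_ν), and is invariant under all permutations of (a₁,…,aₙ) and under all permutations of (b₁,…,b_l) separately. -/
open Finset Function

/-! Each entry `A_λ(x_μ|a|b)` is homogeneous of degree `l + λ − 2` in `(x, a, b)` and depends
on `a`, `b` only through `σ_κ`, `σ̃_κ` and the products `∏ (x − a_jτ)`, `∏ (x − b_iτ⁻¹)`.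
So scaling all variables by `c` scales row `λ` by `c^{l+λ−2}`, permuting `a` or `b` fixes
every entry, and permuting the `x`'s permutes the columns. -/

section SymmetricFunctions

variable {m : ℕ}

lemma esym_comp_perm (a : Fin m → ℂ) (p : Equiv.Perm (Fin m)) (κ : ℕ) :
    esym (a ∘ p) κ = esym a κ := by
  refine Finset.sum_nbij' (·.map p.toEmbedding) (·.map p.symm.toEmbedding) ?_ ?_ ?_ ?_ ?_
  · intro s hs; simpa using hs
  · intro s hs; simpa using hs
  · intro s _; simp [Finset.map_map]
  · intro s _; simp [Finset.map_map]
  · intro s _; rw [Finset.prod_map]; rfl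

lemma hsym_comp_perm (a : Fin m → ℂ) (p : Equiv.Perm (Fin m)) (κ : ℕ) :
    hsym (a ∘ p) κ = hsym a κ := by
  refine Finset.sum_nbij' (·.map p) (·.map p.symm) ?_ ?_ ?_ ?_ ?_
  · intro s _; simp
  · intro s _; simp
  · intro s _; simp [Sym.map_map]
  · intro s _; simp [Sym.map_map]
  · intro s _; rw [Sym.coe_map, Multiset.map_map]

lemma esym_const_mul (c : ℂ) (a : Fin m → ℂ) (κ : ℕ) :
    esym (fun i => c * a i) κ = c ^ κ * esym a κ := by
  rw [esym, esym, Finset.mul_sum]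
  refine Finset.sum_congr rfl fun s hs => ?_
  rw [Finset.prod_mul_distrib, Finset.prod_const, Finset.mem_powersetCard_univ.mp hs]

lemma hsym_const_mul (c : ℂ) (a : Fin m → ℂ) (κ : ℕ) :
    hsym (fun i => c * a i) κ = c ^ κ * hsym a κ := by
  rw [hsym, hsym, Finset.mul_sum]
  refine Finset.sum_congr rfl fun s _ => ?_
  rw [show (fun i => c * a i) = (c * ·) ∘ a from rfl, ← Multiset.map_map,
    Multiset.prod_map_mul]
  simp

end SymmetricFunctions

lemma prod_const_mul_sub {ι R : Type*} [Fintype ι] [CommRing R] (c x t : R) (y : ι → R) :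
    ∏ i, (c * x - c * y i * t) = c ^ Fintype.card ι * ∏ i, (x - y i * t) := by
  rw [← Finset.card_univ, ← Finset.prod_const, ← Finset.prod_mul_distrib]
  exact Finset.prod_congr rfl fun i _ => by ring

section Entries

variable {τ : ℂ} {n l : ℕ}

lemma phiP_comp_perm (lam κ : ℕ) (a : Fin n → ℂ) (b : Fin l → ℂ)
    (pa : Equiv.Perm (Fin n)) (pb : Equiv.Perm (Fin l)) :
    phiP τ lam κ (a ∘ pa) (b ∘ pb) = phiP τ lam κ a b := by
  simp only [phiP, esym_comp_perm, hsym_comp_perm]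

lemma phiP_const_mul (c : ℂ) (lam κ : ℕ) (a : Fin n → ℂ) (b : Fin l → ℂ) :
    phiP τ lam κ (fun j => c * a j) (fun i => c * b i) = c ^ κ * phiP τ lam κ a b := by
  simp only [phiP, esym_const_mul, hsym_const_mul, mul_sub, Finset.mul_sum]
  congr 1
  refine Finset.sum_congr rfl fun β hβ => Finset.sum_congr rfl fun α hα => ?_
  obtain ⟨-, hβκ⟩ := Finset.mem_Icc.mp hβ
  obtain ⟨-, hαβ⟩ := Finset.mem_Icc.mp hα
  rw [← pow_mul_pow_sub c hβκ, ← pow_mul_pow_sub c hαβ]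
  ring

lemma fP_comp_perm (lam : ℕ) (x : ℂ) (a : Fin n → ℂ) (b : Fin l → ℂ)
    (pa : Equiv.Perm (Fin n)) (pb : Equiv.Perm (Fin l)) :
    fP τ lam x (a ∘ pa) (b ∘ pb) = fP τ lam x a b := by
  simp only [fP, phiP_comp_perm]

lemma fP_const_mul (c : ℂ) (lam : ℕ) (x : ℂ) (a : Fin n → ℂ) (b : Fin l → ℂ) :
    fP τ lam (c * x) (fun j => c * a j) (fun i => c * b i)
      = c ^ (((l : ℤ) - n + lam - 1).toNat - 1) * fP τ lam x a b := by
  rw [fP, fP, Finset.mul_sum]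
  refine Finset.sum_congr rfl fun κ hκ => ?_
  rw [phiP_const_mul, mul_pow, ← pow_mul_pow_sub c (show κ ≤ _ - 1 by
    have := Finset.mem_range.mp hκ; omega)]
  ring

lemma gP_comp_perm (lam : ℕ) (x : ℂ) (a : Fin n → ℂ) (pa : Equiv.Perm (Fin n)) :
    gP τ lam x (a ∘ pa) = gP τ lam x a := by
  simp only [gP, esym_comp_perm]

lemma gP_const_mul (c : ℂ) (lam : ℕ) (x : ℂ) (a : Fin n → ℂ) :
    gP τ lam (c * x) (fun j => c * a j) = c ^ (lam - 2) * gP τ lam x a := by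
  rw [gP, gP, Finset.mul_sum]
  refine Finset.sum_congr rfl fun κ hκ => ?_
  rw [esym_const_mul, mul_pow, ← pow_mul_pow_sub c (show κ ≤ lam - 2 by
    have := Finset.mem_range.mp hκ; omega)]
  ring

lemma gP_one (x : ℂ) (a : Fin n → ℂ) : gP τ 1 x a = 0 := by
  simp [gP]

lemma AP_comp_perm (lam : ℕ) (x : ℂ) (a : Fin n → ℂ) (b : Fin l → ℂ)
    (pa : Equiv.Perm (Fin n)) (pb : Equiv.Perm (Fin l)) :
    AP τ lam x (a ∘ pa) (b ∘ pb) = AP τ lam x a b := by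
  rw [AP, AP, fP_comp_perm, gP_comp_perm, comp_def, comp_def,
    Equiv.prod_comp pa (fun j => x - a j * τ), Equiv.prod_comp pb (fun i => x - b i * τ⁻¹)]

lemma AP_const_mul (c : ℂ) {lam : ℕ} (hlam : 1 ≤ lam) (hnl : n < l)
    (x : ℂ) (a : Fin n → ℂ) (b : Fin l → ℂ) :
    AP τ lam (c * x) (fun j => c * a j) (fun i => c * b i)
      = c ^ (l + lam - 2) * AP τ lam x a b := by
  have hf : c ^ n * c ^ (((l : ℤ) - n + lam - 1).toNat - 1) = c ^ (l + lam - 2) := by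
    rw [← pow_add]; congr 1; omega
  -- for `λ = 1` the exponent `λ − 2` truncates, but then `g_λ = 0`
  have hg : c ^ l * c ^ (lam - 2) * gP τ lam x a = c ^ (l + lam - 2) * gP τ lam x a := by
    obtain rfl | hlam2 := hlam.eq_or_lt
    · rw [gP_one, mul_zero, mul_zero]
    · rw [← pow_add, show l + (lam - 2) = l + lam - 2 by omega]
  rw [AP, AP, prod_const_mul_sub, prod_const_mul_sub, fP_const_mul, gP_const_mul,
    Fintype.card_fin, Fintype.card_fin]
  linear_combination ((∏ j, (x - a j * τ)) * fP τ lam x a b) * hf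
    + (τ ^ (2 * (l - n + lam - 1)) * ∏ i, (x - b i * τ⁻¹)) * hg

end Entries

section Determinant

variable {τ : ℂ} {n l : ℕ}

lemma DeltaP_const_mul (hnl : n < l) (c : ℂ) (x a : Fin n → ℂ) (b : Fin l → ℂ) :
    DeltaP τ (fun μ => c * x μ) (fun j => c * a j) (fun i => c * b i)
      = c ^ (n * (l - 1) + n * (n - 1) / 2) * DeltaP τ x a b := by
  have hrows : (Matrix.of fun lam μ : Fin n =>
      AP τ ((lam : ℕ) + 1) (c * x μ) (fun j => c * a j) (fun i => c * b i))
      = Matrix.of fun lam μ : Fin n => c ^ (l - 1 + (lam : ℕ)) *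
          (Matrix.of fun lam μ : Fin n => AP τ ((lam : ℕ) + 1) (x μ) a b) lam μ := by
    ext lam μ
    rw [Matrix.of_apply, Matrix.of_apply, Matrix.of_apply,
      AP_const_mul c (Nat.le_add_left 1 _) hnl]
    congr 2
    omega
  rw [DeltaP, hrows, Matrix.det_mul_column, Finset.prod_pow_eq_pow_sum,
    Fin.sum_univ_eq_sum_range (l - 1 + ·), Finset.sum_add_distrib, Finset.sum_const,
    Finset.sum_range_id, Finset.card_range, smul_eq_mul, mul_comm n, DeltaP]

lemma DeltaP_comp_perm_left (x a : Fin n → ℂ) (b : Fin l → ℂ) (σ : Equiv.Perm (Fin n)) :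
    DeltaP τ (x ∘ σ) a b = Equiv.Perm.sign σ * DeltaP τ x a b :=
  Matrix.det_permute' σ (Matrix.of fun lam μ : Fin n => AP τ ((lam : ℕ) + 1) (x μ) a b)

lemma DeltaP_comp_perm_right (x a : Fin n → ℂ) (b : Fin l → ℂ)
    (pa : Equiv.Perm (Fin n)) (pb : Equiv.Perm (Fin l)) :
    DeltaP τ x (a ∘ pa) (b ∘ pb) = DeltaP τ x a b := by
  simp only [DeltaP, AP_comp_perm]

end Determinant

theorem stmt_15_general
    (τ : ℂ) (n l : ℕ) (hnl : n < l) :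
    (∀ (c : ℂ) (x a : Fin n → ℂ) (b : Fin l → ℂ),
      DeltaP τ (fun μ => c * x μ) (fun j => c * a j) (fun i => c * b i)
        = c ^ (n * (l - 1) + n * (n - 1) / 2) * DeltaP τ x a b)
    ∧ (∀ (x a : Fin n → ℂ) (b : Fin l → ℂ) (μ ν : Fin n), μ ≠ ν →
      DeltaP τ (x ∘ Equiv.swap μ ν) a b = - DeltaP τ x a b)
    ∧ (∀ (x a : Fin n → ℂ) (b : Fin l → ℂ)
        (pa : Equiv.Perm (Fin n)) (pb : Equiv.Perm (Fin l)),
      DeltaP τ x (a ∘ pa) (b ∘ pb) = DeltaP τ x a b) := by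
  refine ⟨DeltaP_const_mul hnl, fun x a b μ ν hμν => ?_, DeltaP_comp_perm_right⟩
  rw [DeltaP_comp_perm_left, Equiv.Perm.sign_swap hμν]
  simp

/-- `Δ^{(nl)}` is homogeneous of degree `n(l−1) + n(n−1)/2`,
antisymmetric in the `x`'s, and symmetric in the `a`'s and `b`'s separately. -/
theorem stmt_15 (q : ℂ) (hq0 : 0 < ‖q‖) (hq1 : ‖q‖ < 1)
    (τ : ℂ) (hτ : τ = q⁻¹) (n l : ℕ) (hn : 1 ≤ n) (hnl : n < l) :
    (∀ (c : ℂ) (x a : Fin n → ℂ) (b : Fin l → ℂ),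
      DeltaP τ (fun μ => c * x μ) (fun j => c * a j) (fun i => c * b i)
        = c ^ (n * (l - 1) + n * (n - 1) / 2) * DeltaP τ x a b)
    ∧ (∀ (x a : Fin n → ℂ) (b : Fin l → ℂ) (μ ν : Fin n), μ ≠ ν →
      DeltaP τ (x ∘ Equiv.swap μ ν) a b = - DeltaP τ x a b)
    ∧ (∀ (x a : Fin n → ℂ) (b : Fin l → ℂ)
        (pa : Equiv.Perm (Fin n)) (pb : Equiv.Perm (Fin l)),
      DeltaP τ x (a ∘ pa) (b ∘ pb) = DeltaP τ x a b) :=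
  stmt_15_general τ n l hnl
end
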